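/- arXiv:2401.06815 — 3 statements merged into one kernel-verified Lean document; each statement's English description precedes it below -/
import Mathlib

section
/- Let a, b be coprime integers and let ℓ be a prime with ℓ ∉ {3, 7}. If ℓ divides both -3(a² - 231ab + 735b²) and 2(a⁴ + 518a³b - 11025a²b² + 6174ab³ - 64827b⁴), then ℓ divides both a and b (a contradiction); hence no prime ℓ ∉ {3,7} divides the gcd of these two values when gcd(a,b)=1. -/
/-!
Write `Ã₇ = -3 A₇` and `B̃₇ = 2 B₇`. Since `ℓ ≠ 3`, `ℓ ∣ A₇`. For `ℓ = 2`,
`A₇ ≡ a² + ab + b² (mod 2)` is odd unless `a` and `b` are both even. Otherwise also `ℓ ∣ B₇`, and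
the explicit combination `u A₇ + v B₇ = 2³·7³·a⁶` gives `ℓ ∣ a`; as the `b⁴`-coefficient of `B₇`
is `-3³·7⁴`, then `ℓ ∣ b`. Either way `ℓ` is a common divisor of the coprime `a` and `b`.
-/

def A₇ (a b : ℤ) : ℤ := a ^ 2 - 231 * a * b + 735 * b ^ 2

def B₇ (a b : ℤ) : ℤ :=
  a ^ 4 + 518 * a ^ 3 * b - 11025 * a ^ 2 * b ^ 2 + 6174 * a * b ^ 3 - 64827 * b ^ 4

lemma Nat.Prime.not_natCast_dvd_natCast_of_ne {ℓ q : ℕ} (hℓ : ℓ.Prime) (hq : q.Prime)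
    (h : ℓ ≠ q) : ¬ (ℓ : ℤ) ∣ q := by
  rw [Int.natCast_dvd_natCast]
  exact fun hdvd => h ((Nat.prime_dvd_prime_iff_eq hℓ hq).mp hdvd)

lemma Prime.dvd_of_dvd_pow_mul_pow_mul_pow {M : Type*} [CommMonoidWithZero M] {p x y z : M}
    (hp : Prime p) (hx : ¬ p ∣ x) (hy : ¬ p ∣ y) {k m n : ℕ}
    (h : p ∣ x ^ k * y ^ m * z ^ n) : p ∣ z := by
  rcases hp.dvd_mul.mp h with h | h
  · rcases hp.dvd_mul.mp h with h | h
    · exact absurd (hp.dvd_of_dvd_pow h) hx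
    · exact absurd (hp.dvd_of_dvd_pow h) hy
  · exact hp.dvd_of_dvd_pow h

lemma two_dvd_and_two_dvd_of_two_dvd_A₇ {a b : ℤ} (h : 2 ∣ A₇ a b) : 2 ∣ a ∧ 2 ∣ b := by
  have key : ∀ x y : ZMod 2, x ^ 2 - 231 * x * y + 735 * y ^ 2 = 0 → x = 0 ∧ y = 0 := by
    decide
  have hcast := (ZMod.intCast_zmod_eq_zero_iff_dvd (A₇ a b) 2).mpr (by exact_mod_cast h)
  push_cast [A₇] at hcast
  simpa [ZMod.intCast_zmod_eq_zero_iff_dvd] using key _ _ hcast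

lemma A₇_B₇_combination (a b : ℤ) :
    (1835 * a ^ 4 - 44037 * a ^ 3 * b + 23373 * a ^ 2 * b ^ 2 - 259308 * a * b ^ 3) * A₇ a b
      + (909 * a ^ 2 - 2940 * a * b) * B₇ a b = 2 ^ 3 * 7 ^ 3 * a ^ 6 := by
  unfold A₇ B₇
  ring

lemma B₇_eq (a b : ℤ) :
    B₇ a b = a * (a ^ 3 + 518 * a ^ 2 * b - 11025 * a * b ^ 2 + 6174 * b ^ 3)
      - 3 ^ 3 * 7 ^ 4 * b ^ 4 := by
  unfold B₇
  ring

lemma dvd_left_of_dvd_A₇_of_dvd_B₇ {p a b : ℤ} (hp : Prime p) (h2 : ¬ p ∣ 2)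
    (h7 : ¬ p ∣ 7) (hA : p ∣ A₇ a b) (hB : p ∣ B₇ a b) : p ∣ a := by
  refine hp.dvd_of_dvd_pow_mul_pow_mul_pow h2 h7 (k := 3) (m := 3) (n := 6) ?_
  rw [← A₇_B₇_combination]
  exact dvd_add (hA.mul_left _) (hB.mul_left _)

lemma dvd_right_of_dvd_left_of_dvd_B₇ {p a b : ℤ} (hp : Prime p) (h3 : ¬ p ∣ 3)
    (h7 : ¬ p ∣ 7) (ha : p ∣ a) (hB : p ∣ B₇ a b) : p ∣ b := by
  refine hp.dvd_of_dvd_pow_mul_pow_mul_pow h3 h7 (k := 3) (m := 4) (n := 4) ?_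
  have hsub := dvd_sub
    (ha.mul_right (a ^ 3 + 518 * a ^ 2 * b - 11025 * a * b ^ 2 + 6174 * b ^ 3)) hB
  rwa [B₇_eq, sub_sub_cancel] at hsub

/-- If `ℓ ∉ {3,7}` is prime and `gcd(a,b)=1`, then `ℓ` does not divide both
`Ã₇(a,b) = -3(a² - 231ab + 735b²)` and
`B̃₇(a,b) = 2(a⁴ + 518a³b - 11025a²b² + 6174ab³ - 64827b⁴)`. -/
theorem stmt_0 (a b : ℤ) (hab : IsCoprime a b) (ℓ : ℕ) (hℓ : ℓ.Prime)
    (h3 : ℓ ≠ 3) (h7 : ℓ ≠ 7) :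
    ¬ ((ℓ : ℤ) ∣ -3 * (a ^ 2 - 231 * a * b + 735 * b ^ 2) ∧
       (ℓ : ℤ) ∣ 2 * (a ^ 4 + 518 * a ^ 3 * b - 11025 * a ^ 2 * b ^ 2
          + 6174 * a * b ^ 3 - 64827 * b ^ 4)) := by
  rintro ⟨hA, hB⟩
  have hp : Prime (ℓ : ℤ) := Nat.prime_iff_prime_int.mp hℓ
  have hd3 : ¬ (ℓ : ℤ) ∣ 3 := by
    exact_mod_cast hℓ.not_natCast_dvd_natCast_of_ne Nat.prime_three h3
  have hd7 : ¬ (ℓ : ℤ) ∣ 7 := by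
    exact_mod_cast hℓ.not_natCast_dvd_natCast_of_ne (by norm_num) h7
  have hA₇ : (ℓ : ℤ) ∣ A₇ a b := (hp.dvd_mul.mp hA).resolve_left (Int.dvd_neg.not.mpr hd3)
  suffices (ℓ : ℤ) ∣ a ∧ (ℓ : ℤ) ∣ b from hp.not_isUnit (hab.isUnit_of_dvd' this.1 this.2)
  obtain rfl | h2 := eq_or_ne ℓ 2
  · exact two_dvd_and_two_dvd_of_two_dvd_A₇ hA₇
  have hd2 : ¬ (ℓ : ℤ) ∣ 2 := by
    exact_mod_cast hℓ.not_natCast_dvd_natCast_of_ne Nat.prime_two h2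
  have hB₇ : (ℓ : ℤ) ∣ B₇ a b := (hp.dvd_mul.mp hB).resolve_left hd2
  have ha := dvd_left_of_dvd_A₇_of_dvd_B₇ hp hd2 hd7 hA₇ hB₇
  exact ⟨ha, dvd_right_of_dvd_left_of_dvd_B₇ hp hd3 hd7 ha hB₇⟩
end

section
/- For all real numbers a, b, one has 108·(a² + ab + 7b²)⁶ ≤ max(4·|A₇(a,b)|³, 27·|B₇(a,b)|²), where A₇(a,b) = -3(a²+ab+7b²)(a²-231ab+735b²) and B₇(a,b) = 2(a²+ab+7b²)(a⁴+518a³b-11025a²b²+6174ab³-64827b⁴). -/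
/-!
Write `C = a² + ab + 7b²`, `A₇ = -3·C·q` and `B₇ = 2·C·p`. The two entries of the maximum are
`108·|C|³|q|³` and `108·C²p²`, so it suffices that `C ≤ |q|` or `C² ≤ |p|`. If instead
`|q| < C` and `|p| < C²`, then `C - q`, `C + q` and `C² ± p` are all positive, and a
degree-six certificate built from their products (and from `a²`, `b²`) is contradictory.
-/

theorem le_four_mul_abs_neg_three_mul_cube {C q : ℝ} (h : |C| ≤ |q|) :
    108 * C ^ 6 ≤ 4 * |-3 * C * q| ^ 3 :=
  calc 108 * C ^ 6 = 108 * (|C| ^ 3 * |C| ^ 3) := by rw [← (by decide : Even 6).pow_abs]; ring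
    _ ≤ 108 * (|C| ^ 3 * |q| ^ 3) := by gcongr
    _ = 4 * |-3 * C * q| ^ 3 := by simp only [abs_mul, abs_neg, Nat.abs_ofNat]; ring

theorem le_twentySeven_mul_abs_two_mul_sq {C p : ℝ} (h : C ^ 2 ≤ |p|) :
    108 * C ^ 6 ≤ 27 * |2 * C * p| ^ 2 :=
  calc 108 * C ^ 6 = 108 * (C ^ 2 * (C ^ 2) ^ 2) := by ring
    _ ≤ 108 * (C ^ 2 * |p| ^ 2) := by gcongr
    _ = 27 * |2 * C * p| ^ 2 := by simp only [abs_mul, abs_two, mul_pow, sq_abs]; ring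

theorem c7_nonneg (a b : ℝ) : 0 ≤ a ^ 2 + a * b + 7 * b ^ 2 := by
  nlinarith [sq_nonneg (2 * a + b), sq_nonneg b]

theorem c7_le_abs_or_sq_le_abs (a b : ℝ) :
    a ^ 2 + a * b + 7 * b ^ 2 ≤ |a ^ 2 - 231 * a * b + 735 * b ^ 2| ∨
      (a ^ 2 + a * b + 7 * b ^ 2) ^ 2 ≤
        |a ^ 4 + 518 * a ^ 3 * b - 11025 * a ^ 2 * b ^ 2 + 6174 * a * b ^ 3 - 64827 * b ^ 4| := by
  by_contra! h
  obtain ⟨hq, hp⟩ := h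
  obtain ⟨hq₁, hq₂⟩ := abs_lt.mp hq
  obtain ⟨hp₁, hp₂⟩ := abs_lt.mp hp
  nlinarith [mul_pos (neg_lt_iff_pos_add.mp hq₁) (sub_pos.mpr hq₂)]

/-- For all real `a, b`: `108·C₇(a,b)⁶ ≤ max(4|A₇(a,b)|³, 27|B₇(a,b)|²)`,
where `C₇ = a²+ab+7b²`, `A₇ = -3·C₇·(a²-231ab+735b²)`, and
`B₇ = 2·C₇·(a⁴+518a³b-11025a²b²+6174ab³-64827b⁴)`. -/
theorem stmt_8 (a b : ℝ) :
    108 * (a ^ 2 + a * b + 7 * b ^ 2) ^ 6 ≤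
      max (4 * |(-3 : ℝ) * (a ^ 2 + a * b + 7 * b ^ 2) *
              (a ^ 2 - 231 * a * b + 735 * b ^ 2)| ^ 3)
          (27 * |(2 : ℝ) * (a ^ 2 + a * b + 7 * b ^ 2) *
              (a ^ 4 + 518 * a ^ 3 * b - 11025 * a ^ 2 * b ^ 2
                + 6174 * a * b ^ 3 - 64827 * b ^ 4)| ^ 2) := by
  rcases c7_le_abs_or_sq_le_abs a b with h | h
  · rw [← abs_of_nonneg (c7_nonneg a b)] at h
    exact le_max_of_le_left (le_four_mul_abs_neg_three_mul_cube h)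
  · exact le_max_of_le_right (le_twentySeven_mul_abs_two_mul_sq h)
end

section
/- The resultant of t² + t + 7 and t² + 4 equals 13, and consequently for coprime integers a, b, any common prime divisor of a² + ab + 7b² and a² + 4b² must equal 13. -/
/-- The resultant of `t² + t + 7` and `t² + 4` (the determinant of their
Sylvester matrix) equals 13; consequently, for coprime integers `a, b`, any
common prime divisor of `a² + ab + 7b²` and `a² + 4b²` equals 13. -/
theorem stmt_10 :
    Matrix.det !![(1 : ℤ), 1, 7, 0; 0, 1, 1, 7; 1, 0, 4, 0; 0, 1, 0, 4] = 13 ∧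
    ∀ a b : ℤ, IsCoprime a b → ∀ p : ℕ, p.Prime →
      (p : ℤ) ∣ a ^ 2 + a * b + 7 * b ^ 2 → (p : ℤ) ∣ a ^ 2 + 4 * b ^ 2 →
      p = 13 := by
  constructor
  · decide
  · intro a b hab p hp h1 h2
    have hq : Prime (p : ℤ) := Nat.prime_iff_prime_int.mp hp
    -- no common prime divisor of a and b
    have hnot : ¬ ((p : ℤ) ∣ a ∧ (p : ℤ) ∣ b) := by
      rintro ⟨ha, hb⟩
      obtain ⟨u, v, huv⟩ := hab
      have : (p : ℤ) ∣ 1 := huv ▸ dvd_add (Dvd.dvd.mul_left ha u) (Dvd.dvd.mul_left hb v)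
      exact hq.not_dvd_one this
    have h3 : (p : ℤ) ∣ b * (a + 3 * b) := by
      have := dvd_sub h1 h2
      have e : a ^ 2 + a * b + 7 * b ^ 2 - (a ^ 2 + 4 * b ^ 2) = b * (a + 3 * b) := by ring
      rwa [e] at this
    rcases hq.dvd_mul.mp h3 with hb | hab3
    · -- p ∣ b, then p ∣ a², contradiction
      have ha2 : (p : ℤ) ∣ a ^ 2 := by
        have : a ^ 2 = (a ^ 2 + 4 * b ^ 2) - 4 * b * b := by ring
        rw [this]
        exact dvd_sub h2 (Dvd.dvd.mul_left hb (4 * b))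
      have ha : (p : ℤ) ∣ a := hq.dvd_of_dvd_pow ha2
      exact absurd ⟨ha, hb⟩ hnot
    · -- p ∣ a + 3b, so p ∣ 13 b²
      have h13 : (p : ℤ) ∣ 13 * b ^ 2 := by
        have : 13 * b ^ 2 = (a ^ 2 + 4 * b ^ 2) - (a + 3 * b) * (a - 3 * b) := by ring
        rw [this]
        exact dvd_sub h2 (Dvd.dvd.mul_right hab3 _)
      rcases hq.dvd_mul.mp h13 with h13' | hb2
      · have : (p : ℕ) ∣ 13 := by exact_mod_cast h13'
        exact (Nat.prime_dvd_prime_iff_eq hp (by norm_num)).mp this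
      · have hb : (p : ℤ) ∣ b := hq.dvd_of_dvd_pow hb2
        have ha : (p : ℤ) ∣ a := by
          have : a = (a + 3 * b) - 3 * b := by ring
          rw [this]
          exact dvd_sub hab3 (Dvd.dvd.mul_left hb 3)
        exact absurd ⟨ha, hb⟩ hnot
end
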